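/- Let n ≥ 3 and let H = {p_1^{k_1} p_2^{k_2} : k_1, k_2 ∈ ℕ, k_1 ≡ k_2 (mod n)} ∪ {1} ⊆ F({p_1, p_2}), the free abelian monoid on two elements p_1, p_2. Then: (i) the set of atoms of H is A(H) = {p_1 p_2^{k} : k ∈ 1 + nℕ_0} ∪ {p_1^{k} p_2 : k ∈ 1 + nℕ_0}; (ii) L_H(p_1^{n+2} p_2^{n+2}) = {2, n+2}; (iii) every element of Δ(H) is divisible by n, n ∈ Δ(H), and hence min Δ(H) = n. -/

import Mathlib

/-!
An element `≠ 1` of `H` whose two exponents are both at least `2` has the factor `p_1 p_2 ∈ H`,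
so the atoms of `H` are its elements with an exponent equal to `1`, and the other exponent of an
atom is then `≡ 1 (mod n)`. Hence a factorization of `a` into `k` atoms forces
`k ≡ v_{p_1}(a) (mod n)` and `k ≤ v_{p_1}(a)`: all lengths of `a` are congruent modulo `n`, so `n`
divides every distance. For `a = p_1^{n+2} p_2^{n+2}` and `n ≥ 3` this leaves only the lengths
`2` and `n + 2`, realized by `(p_1 p_2^{n+1}) (p_1^{n+1} p_2)` and `(p_1 p_2)^{n+2}`.
-/

namespace ArXivSeminormal

attribute [local instance] Classical.propDecidable

noncomputable section

/-! ### Generic factorization theory in commutative monoids -/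

variable {M : Type*} [CommMonoid M]

/-- The set of factorizations of `a` (in the sense of `Z(a)`): multisets of irreducible
elements of the reduced monoid (modelled by `Associates M`) whose product is the class
of `a`. -/
def Factorizations (a : M) : Set (Multiset (Associates M)) :=
  {z | (∀ x ∈ z, Irreducible x) ∧ z.prod = Associates.mk a}

/-- The set of lengths `L(a)` of an element `a`. -/
def lengthSet (a : M) : Set ℕ :=
  {k | ∃ z ∈ Factorizations a, Multiset.card z = k}

/-- The set of (successive) distances `Δ(L)` of a set `L ⊆ ℕ`. -/
def DeltaSet (L : Set ℕ) : Set ℕ :=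
  {d | ∃ k l, k ∈ L ∧ l ∈ L ∧ k < l ∧ (∀ m, k < m → m < l → m ∉ L) ∧ d = l - k}

/-- The set of distances `Δ(H)` of a monoid `H`. -/
def DeltaMonoid (M : Type*) [CommMonoid M] : Set ℕ :=
  ⋃ a : M, DeltaSet (lengthSet a)

/-- The distance between two factorizations:
`d(z,z') = max (card (z - gcd z z')) (card (z' - gcd z z'))`. -/
def factorDist (z z' : Multiset (Associates M)) : ℕ :=
  max (Multiset.card (z - z')) (Multiset.card (z' - z))

/-- The catenary degree `c(H)` of a monoid `H`: the smallest `N ∈ ℕ∞` such that any two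
factorizations of any element are connected by a chain of factorizations with consecutive
distances at most `N`. -/
def catenaryDegree (M : Type*) [CommMonoid M] : ℕ∞ :=
  sInf {N : ℕ∞ | ∀ (a : M), ∀ z ∈ Factorizations a, ∀ z' ∈ Factorizations a,
    ∃ c : List (Multiset (Associates M)), c.head? = some z ∧ c.getLast? = some z' ∧
      (∀ w ∈ c, w ∈ Factorizations a) ∧
      List.Chain' (fun u v => (factorDist u v : ℕ∞) ≤ N) c}

/-- A monoid is factorial if every element has a unique factorization. -/
def IsFactorialMonoid (M : Type*) [CommMonoid M] : Prop :=
  ∀ a : M, ∃! z : Multiset (Associates M), z ∈ Factorizations a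

/-! ### Free commutative monoids, block monoids, Davenport constant -/

/-- The free abelian (multiplicatively written) monoid on a set `P`. -/
abbrev FreeCM (P : Type*) := Multiplicative (Multiset P)

/-- The sum homomorphism `σ : F(G) → G`. -/
def sigmaHom (G : Type*) [AddCommMonoid G] : FreeCM G →* Multiplicative G :=
  AddMonoidHom.toMultiplicative
    { toFun := Multiset.sum
      map_zero' := Multiset.sum_zero
      map_add' := Multiset.sum_add }

/-- The monoid of zero-sum sequences over `G`. -/
def BlockMonoid (G : Type*) [AddCommMonoid G] : Submonoid (FreeCM G) :=
  MonoidHom.mker (sigmaHom G)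

/-- The Davenport constant of `G`: the supremum of lengths of minimal zero-sum sequences. -/
def Davenport (G : Type*) [AddCommMonoid G] : ℕ :=
  sSup {k | ∃ u : BlockMonoid G, Irreducible u ∧
    Multiset.card (Multiplicative.toAdd (u : FreeCM G)) = k}

/-! ### Reduced seminormal finitely primary monoids -/

/-- The `Fin s →₀ ℕ` function with all values `1`, i.e. the exponent vector of
`q_1 ⋯ q_s`. -/
def allOnes (s : ℕ) : Fin s →₀ ℕ := Finsupp.equivFunOnFinite.symm fun _ => 1

/-- The reduced seminormal finitely primary monoid of rank `s` with unit group `U` of the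
complete integral closure:
`D = {ε q_1^{k_1} ⋯ q_s^{k_s} : ε ∈ U, all k_j ≥ 1} ∪ {1} ⊆ U × [q_1,…,q_s]`. -/
def seminormalD (U : Type*) [CommGroup U] (s : ℕ) :
    Submonoid (U × Multiplicative (Fin s →₀ ℕ)) where
  carrier := {x | x = 1 ∨ ∀ j, 1 ≤ Multiplicative.toAdd x.2 j}
  one_mem' := Or.inl rfl
  mul_mem' := by
    rintro a b (rfl | ha) (rfl | hb)
    · exact Or.inl (mul_one 1)
    · rw [Set.mem_setOf_eq, one_mul]; exact Or.inr hb
    · rw [Set.mem_setOf_eq, mul_one]; exact Or.inr ha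
    · refine Or.inr fun j => ?_
      have h1 := ha j
      have h2 := hb j
      have h3 : Multiplicative.toAdd ((a * b).2) j
          = Multiplicative.toAdd a.2 j + Multiplicative.toAdd b.2 j := rfl
      omega

/-! ### T-block monoids (Setting (S)) -/

/-- The monoid `T = D_1 × ⋯ × D_n`. -/
abbrev Tm {n : ℕ} (U : Fin n → Type*) [∀ i, CommGroup (U i)] (s : Fin n → ℕ) :=
  ∀ i, ↥(seminormalD (U i) (s i))

/-- The monoid `D̂_1 × ⋯ × D̂_n`. -/
abbrev HatTm {n : ℕ} (U : Fin n → Type*) [∀ i, CommGroup (U i)] (s : Fin n → ℕ) :=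
  ∀ i, U i × Multiplicative (Fin (s i) →₀ ℕ)

/-- The monoid `F = F(G) × T`. -/
abbrev Fm (G : Type*) {n : ℕ} (U : Fin n → Type*) [∀ i, CommGroup (U i)] (s : Fin n → ℕ) :=
  FreeCM G × Tm U s

/-- The homomorphism `F → G`, `S·t ↦ σ(S) + ι(t)`, whose kernel is the `T`-block monoid;
it computes the class `[a] ∈ G ≅ q(F)/q(B)` of `a ∈ F`. -/
def TBlockPhi (G : Type*) [AddCommGroup G] {n : ℕ} (U : Fin n → Type*) [∀ i, CommGroup (U i)]
    (s : Fin n → ℕ) (iota : Tm U s →* Multiplicative G) : Fm G U s →* Multiplicative G :=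
  ((sigmaHom G).comp (MonoidHom.fst _ _)) * (iota.comp (MonoidHom.snd _ _))

/-- The `T`-block monoid `B = B(G, T, ι) = {S·t ∈ F(G) × T : σ(S) + ι(t) = 0}`. -/
def TBlock (G : Type*) [AddCommGroup G] {n : ℕ} (U : Fin n → Type*) [∀ i, CommGroup (U i)]
    (s : Fin n → ℕ) (iota : Tm U s →* Multiplicative G) : Submonoid (Fm G U s) :=
  MonoidHom.mker (TBlockPhi G U s iota)

/-- The inclusion `T = D_1 × ⋯ × D_n → D̂_1 × ⋯ × D̂_n`. -/
def embedT {n : ℕ} (U : Fin n → Type*) [∀ i, CommGroup (U i)] (s : Fin n → ℕ) :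
    Tm U s →* HatTm U s :=
  Pi.monoidHom fun i => (seminormalD (U i) (s i)).subtype.comp
    (Pi.evalMonoidHom (fun j => ↥(seminormalD (U j) (s j))) i)

/-- The norm `‖A‖ = k + 2·Σ_i max L_{D_i}(a_i)` of `A = g_1⋯g_k a_1⋯a_n ∈ F`. -/
def normF (G : Type*) {n : ℕ} (U : Fin n → Type*) [∀ i, CommGroup (U i)] (s : Fin n → ℕ)
    (A : Fm G U s) : ℕ :=
  Multiset.card (Multiplicative.toAdd A.1) + 2 * ∑ i, sSup (lengthSet (A.2 i))

/-- The class `[ε] ∈ G` of a unit `ε ∈ D̂_ν^×`. -/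
def classOfUnit {G : Type*} [AddCommGroup G] {n : ℕ} (U : Fin n → Type*)
    [∀ i, CommGroup (U i)] (s : Fin n → ℕ) (iotahat : HatTm U s →* Multiplicative G)
    (ν : Fin n) (ε : U ν) : Multiplicative G :=
  iotahat (Pi.mulSingle ν (ε, 1))

/-- The class `[q_{ν,j}] ∈ G` of the prime `q_{ν,j}` of `D̂_ν`. -/
def classOfPrime {G : Type*} [AddCommGroup G] {n : ℕ} (U : Fin n → Type*)
    [∀ i, CommGroup (U i)] (s : Fin n → ℕ) (iotahat : HatTm U s →* Multiplicative G)
    (ν : Fin n) (j : Fin (s ν)) : Multiplicative G :=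
  iotahat (Pi.mulSingle ν (1, Multiplicative.ofAdd (Finsupp.single j 1)))

/-- The quantity `d_ν ∈ {-1, 0, 1, 2}` from Theorem 3.3 (for `G = {0, e}` of order two). -/
def dval {G : Type*} [AddCommGroup G] {n : ℕ} (U : Fin n → Type*) [∀ i, CommGroup (U i)]
    (s : Fin n → ℕ) (iotahat : HatTm U s →* Multiplicative G) (e : G) (ν : Fin n) : ℤ :=
  if (∀ ε : U ν, classOfUnit U s iotahat ν ε = 1) ∧ s ν = 2 ∧
      (Finset.univ.filter fun j : Fin (s ν) =>
        classOfPrime U s iotahat ν j = Multiplicative.ofAdd e).card = 2 then 2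
  else if (∀ ε : U ν, classOfUnit U s iotahat ν ε = 1) ∧ s ν = 1 then 0
  else if (∀ ε : U ν, classOfUnit U s iotahat ν ε = 1) ∧ 2 ≤ s ν ∧
      (Finset.univ.filter fun j : Fin (s ν) =>
        classOfPrime U s iotahat ν j = Multiplicative.ofAdd e).card = 0 then -1
  else 1

/-- The monoid `H = {p_1^{k_1} p_2^{k_2} : k_1, k_2 ∈ ℕ, k_1 ≡ k_2 (mod n)} ∪ {1}`
inside the free abelian monoid on `{p_1, p_2}` (letters `0` and `1` of `Fin 2`). -/
def congMonoid (n : ℕ) : Submonoid (FreeCM (Fin 2)) where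
  carrier := {x | x = 1 ∨
    (1 ≤ Multiset.count 0 (Multiplicative.toAdd x) ∧
     1 ≤ Multiset.count 1 (Multiplicative.toAdd x) ∧
     Multiset.count 0 (Multiplicative.toAdd x) ≡
       Multiset.count 1 (Multiplicative.toAdd x) [MOD n])}
  one_mem' := Or.inl rfl
  mul_mem' := by
    rintro a b (rfl | ⟨ha0, ha1, ha⟩) (rfl | ⟨hb0, hb1, hb⟩)
    · exact Or.inl (mul_one 1)
    · rw [Set.mem_setOf_eq, one_mul]; exact Or.inr ⟨hb0, hb1, hb⟩
    · rw [Set.mem_setOf_eq, mul_one]; exact Or.inr ⟨ha0, ha1, ha⟩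
    · refine Or.inr ?_
      have key : Multiplicative.toAdd (a * b)
          = Multiplicative.toAdd a + Multiplicative.toAdd b := rfl
      refine ⟨?_, ?_, ?_⟩
      · rw [key, Multiset.count_add]; omega
      · rw [key, Multiset.count_add]; omega
      · rw [key, Multiset.count_add, Multiset.count_add]
        exact Nat.ModEq.add ha hb

theorem one_modEq_iff_eq_one_add_mul {n b : ℕ} (hb : 1 ≤ b) :
    1 ≡ b [MOD n] ↔ ∃ m, b = 1 + n * m := by
  rw [Nat.modEq_iff_dvd' hb]
  constructor
  · rintro ⟨m, hm⟩
    exact ⟨m, by omega⟩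
  · rintro ⟨m, rfl⟩
    simp

section Factorizations

variable {M : Type*} [CommMonoid M]

theorem irreducible_associates_mk [Subsingleton Mˣ] {a : M} :
    Irreducible (Associates.mk a) ↔ Irreducible a :=
  MulEquiv.irreducible_iff (f := MulEquiv.ofBijective Associates.mkMonoidHom
    ⟨Associates.mk_injective, Associates.mk_surjective⟩)

theorem mem_lengthSet_iff [Subsingleton Mˣ] {a : M} {k : ℕ} :
    k ∈ lengthSet a ↔
      ∃ w : Multiset M, (∀ x ∈ w, Irreducible x) ∧ w.prod = a ∧ Multiset.card w = k := by
  constructor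
  · rintro ⟨z, ⟨hirr, hprod⟩, rfl⟩
    obtain ⟨w, rfl⟩ := Multiset.map_surjective_of_surjective Associates.mk_surjective z
    refine ⟨w, fun x hx => ?_, Associates.mk_injective ?_, (Multiset.card_map _ _).symm⟩
    · exact irreducible_associates_mk.1 (hirr _ (Multiset.mem_map_of_mem _ hx))
    · rw [← Associates.prod_mk, hprod]
  · rintro ⟨w, hirr, rfl, rfl⟩
    refine ⟨w.map Associates.mk, ⟨?_, Associates.prod_mk⟩, Multiset.card_map _ _⟩
    simpa only [Multiset.forall_mem_map_iff, irreducible_associates_mk] using hirr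

theorem pos_of_mem_DeltaSet {L : Set ℕ} {d : ℕ} (hd : d ∈ DeltaSet L) : 0 < d := by
  obtain ⟨k, l, -, -, hkl, -, rfl⟩ := hd
  omega

theorem dvd_of_mem_DeltaSet {L : Set ℕ} {n d : ℕ} (hL : ∀ k ∈ L, ∀ l ∈ L, k ≡ l [MOD n])
    (hd : d ∈ DeltaSet L) : n ∣ d := by
  obtain ⟨k, l, hk, hl, hkl, -, rfl⟩ := hd
  exact (Nat.modEq_iff_dvd' hkl.le).1 (hL k hk l hl)

theorem sub_mem_DeltaSet_pair {k l : ℕ} (hkl : k < l) : l - k ∈ DeltaSet {k, l} :=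
  ⟨k, l, by simp, by simp, hkl, fun m hkm hml hm => by rcases hm with rfl | rfl <;> omega, rfl⟩

theorem pos_of_mem_DeltaMonoid {d : ℕ} (hd : d ∈ DeltaMonoid M) : 0 < d := by
  obtain ⟨a, hd⟩ := Set.mem_iUnion.1 hd
  exact pos_of_mem_DeltaSet hd

end Factorizations

def exponent (i : Fin 2) (x : FreeCM (Fin 2)) : ℕ :=
  Multiset.count i (Multiplicative.toAdd x)

theorem exponent_mul (i : Fin 2) (x y : FreeCM (Fin 2)) :
    exponent i (x * y) = exponent i x + exponent i y :=
  Multiset.count_add _ _ _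

@[simp]
theorem exponent_one (i : Fin 2) : exponent i 1 = 0 :=
  Multiset.count_zero _

theorem ext_exponent {x y : FreeCM (Fin 2)} (h : ∀ i, exponent i x = exponent i y) : x = y :=
  Multiset.ext.2 h

def monomial (k l : ℕ) : FreeCM (Fin 2) :=
  Multiplicative.ofAdd (Multiset.replicate k 0 + Multiset.replicate l 1)

@[simp]
theorem exponent_zero_monomial (k l : ℕ) : exponent 0 (monomial k l) = k := by
  simp [exponent, monomial, Multiset.count_replicate]

@[simp]
theorem exponent_one_monomial (k l : ℕ) : exponent 1 (monomial k l) = l := by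
  simp [exponent, monomial, Multiset.count_replicate]

theorem monomial_mul (k l k' l' : ℕ) :
    monomial k l * monomial k' l' = monomial (k + k') (l + l') :=
  ext_exponent fun i => by fin_cases i <;> simp [exponent_mul]

theorem monomial_pow (k l m : ℕ) : monomial k l ^ m = monomial (m * k) (m * l) := by
  induction m with
  | zero => exact ext_exponent fun i => by fin_cases i <;> simp
  | succ m ih => rw [pow_succ, ih, monomial_mul]; ring_nf

namespace congMonoid

variable {n : ℕ}

theorem mem_iff {x : FreeCM (Fin 2)} :
    x ∈ congMonoid n ↔
      x = 1 ∨ (1 ≤ exponent 0 x ∧ 1 ≤ exponent 1 x ∧ exponent 0 x ≡ exponent 1 x [MOD n]) :=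
  Iff.rfl

theorem monomial_mem {k l : ℕ} (hk : 1 ≤ k) (hl : 1 ≤ l) (h : k ≡ l [MOD n]) :
    monomial k l ∈ congMonoid n :=
  mem_iff.2 <| .inr <| by
    simp only [exponent_zero_monomial, exponent_one_monomial]
    exact ⟨hk, hl, h⟩

theorem eq_one_of_exponent_eq_zero {a : congMonoid n} {i : Fin 2} (h : exponent i a = 0) :
    a = 1 := by
  rcases mem_iff.1 a.2 with ha | ⟨h0, h1, -⟩
  · exact Subtype.ext ha
  · fin_cases i <;> simp_all

theorem irreducible_iff {x : FreeCM (Fin 2)} (hx : x ∈ congMonoid n) :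
    Irreducible (⟨x, hx⟩ : congMonoid n) ↔ exponent 0 x = 1 ∨ exponent 1 x = 1 := by
  constructor
  · intro hirr
    by_contra! hne
    rcases mem_iff.1 hx with rfl | ⟨h0, h1, hmod⟩
    · exact hirr.ne_one rfl
    have hmod' : exponent 0 x - 1 ≡ exponent 1 x - 1 [MOD n] :=
      Nat.ModEq.add_right_cancel' 1 (by rwa [Nat.sub_add_cancel h0, Nat.sub_add_cancel h1])
    have hsplit : (⟨x, hx⟩ : congMonoid n) =
        ⟨monomial 1 1, monomial_mem le_rfl le_rfl rfl⟩ *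
          ⟨monomial _ _, monomial_mem (by omega) (by omega) hmod'⟩ :=
      Subtype.ext <| ext_exponent fun i => by
        fin_cases i <;> simp [monomial_mul] <;> omega
    rcases hirr.isUnit_or_isUnit hsplit with hu | hu <;>
    · have := congrArg (exponent 0 ∘ Subtype.val) (isUnit_iff_eq_one.1 hu)
      simp at this <;> omega
  · intro h
    obtain ⟨i, hi⟩ : ∃ i, exponent i x = 1 := h.elim (⟨0, ·⟩) (⟨1, ·⟩)
    refine ⟨fun hu => ?_, fun a b hab => ?_⟩
    · simpa [hi] using congrArg (exponent i ∘ Subtype.val) (isUnit_iff_eq_one.1 hu)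
    have hsum : exponent i a + exponent i b = 1 := by
      rw [← hi, ← exponent_mul]; exact congrArg (exponent i ∘ Subtype.val) hab.symm
    rcases Nat.eq_zero_or_pos (exponent i a) with ha | ha
    · exact .inl (isUnit_iff_eq_one.2 (eq_one_of_exponent_eq_zero ha))
    · exact .inr (isUnit_iff_eq_one.2 (eq_one_of_exponent_eq_zero (i := i) (by omega)))

theorem setOf_irreducible_eq (n : ℕ) :
    {x | ∃ h : x ∈ congMonoid n, Irreducible (⟨x, h⟩ : congMonoid n)} =
      {x | (exponent 0 x = 1 ∧ ∃ m, exponent 1 x = 1 + n * m) ∨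
        (exponent 1 x = 1 ∧ ∃ m, exponent 0 x = 1 + n * m)} := by
  ext x
  simp only [Set.mem_setOf_eq]
  constructor
  · rintro ⟨hx, hirr⟩
    have he := (irreducible_iff hx).1 hirr
    rcases mem_iff.1 hx with rfl | ⟨h0, h1, hmod⟩
    · simp at he
    rcases he with he | he <;> rw [he] at hmod
    · exact .inl ⟨he, (one_modEq_iff_eq_one_add_mul h1).1 hmod⟩
    · exact .inr ⟨he, (one_modEq_iff_eq_one_add_mul h0).1 hmod.symm⟩
  · rintro (⟨he, m, hm⟩ | ⟨he, m, hm⟩)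
    · have hmod := (one_modEq_iff_eq_one_add_mul (by omega)).2 ⟨m, hm⟩
      have hx : x ∈ congMonoid n := mem_iff.2 (.inr ⟨by omega, by omega, by rwa [he]⟩)
      exact ⟨hx, (irreducible_iff hx).2 (.inl he)⟩
    · have hmod := ((one_modEq_iff_eq_one_add_mul (by omega)).2 ⟨m, hm⟩).symm
      have hx : x ∈ congMonoid n := mem_iff.2 (.inr ⟨by omega, by omega, by rwa [he]⟩)
      exact ⟨hx, (irreducible_iff hx).2 (.inr he)⟩

theorem exponent_modEq_one_of_irreducible {a : congMonoid n} (ha : Irreducible a) (i : Fin 2) :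
    exponent i a ≡ 1 [MOD n] ∧ 1 ≤ exponent i a := by
  rcases mem_iff.1 a.2 with h1 | ⟨h0, h1, hmod⟩
  · exact absurd (Subtype.ext h1) ha.ne_one
  rcases (irreducible_iff a.2).1 ha with he | he <;> rw [he] at hmod <;>
    fin_cases i <;> simp_all [Nat.ModEq.refl, Nat.ModEq.symm]

theorem card_modEq_exponent_prod {w : Multiset (congMonoid n)} (hw : ∀ a ∈ w, Irreducible a)
    (i : Fin 2) :
    Multiset.card w ≡ exponent i w.prod [MOD n] ∧ Multiset.card w ≤ exponent i w.prod := by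
  induction w using Multiset.induction_on with
  | empty => simp [Nat.ModEq.refl]
  | cons a w ih =>
    obtain ⟨ha, ha'⟩ := exponent_modEq_one_of_irreducible (hw a (Multiset.mem_cons_self a w)) i
    obtain ⟨ih, ih'⟩ := ih fun b hb => hw b (Multiset.mem_cons_of_mem hb)
    rw [Multiset.card_cons, Multiset.prod_cons, Submonoid.coe_mul, exponent_mul,
      add_comm (exponent i a)]
    exact ⟨ih.add ha.symm, by omega⟩

theorem modEq_exponent_of_mem_lengthSet {a : congMonoid n} {k : ℕ} (hk : k ∈ lengthSet a)
    (i : Fin 2) : k ≡ exponent i a [MOD n] ∧ k ≤ exponent i a := by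
  obtain ⟨w, hw, rfl, rfl⟩ := mem_lengthSet_iff.1 hk
  exact card_modEq_exponent_prod hw i

theorem dvd_of_mem_DeltaMonoid {d : ℕ} (hd : d ∈ DeltaMonoid (congMonoid n)) : n ∣ d := by
  obtain ⟨a, hd⟩ := Set.mem_iUnion.1 hd
  refine dvd_of_mem_DeltaSet (fun k hk l hl => ?_) hd
  exact (modEq_exponent_of_mem_lengthSet hk 0).1.trans (modEq_exponent_of_mem_lengthSet hl 0).1.symm

theorem lengthSet_monomial (hn : 3 ≤ n) (h : monomial (n + 2) (n + 2) ∈ congMonoid n) :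
    lengthSet (⟨_, h⟩ : congMonoid n) = {2, n + 2} := by
  ext k
  constructor
  · intro hk
    obtain ⟨hmod, hle⟩ := modEq_exponent_of_mem_lengthSet hk 0
    simp only [exponent_zero_monomial] at hmod hle
    obtain ⟨c, hc⟩ := (Nat.modEq_iff_dvd' hle).1 hmod
    have hc2 : c < 2 := by
      by_contra! hc2
      nlinarith [Nat.sub_le (n + 2) k]
    interval_cases c <;> simp <;> omega
  · rw [mem_lengthSet_iff]
    rintro (rfl | rfl)
    · have hmod : n + 1 ≡ 1 [MOD n] := Nat.add_modEq_right_iff.2 dvd_rfl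
      refine ⟨{⟨monomial 1 (n + 1), monomial_mem le_rfl (by omega) hmod.symm⟩,
        ⟨monomial (n + 1) 1, monomial_mem (by omega) le_rfl hmod⟩}, fun a ha => ?_, ?_, rfl⟩
      · simp only [Multiset.insert_eq_cons, Multiset.mem_cons, Multiset.mem_singleton] at ha
        rcases ha with rfl | rfl <;> simp [irreducible_iff]
      · refine Subtype.ext ?_
        simp only [Multiset.insert_eq_cons, Multiset.prod_cons, Multiset.prod_singleton,
          Submonoid.coe_mul, monomial_mul]
        congr 1
        omega
    · refine ⟨Multiset.replicate (n + 2) ⟨monomial 1 1, monomial_mem le_rfl le_rfl rfl⟩,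
        fun a ha => ?_, ?_, Multiset.card_replicate _ _⟩
      · rw [Multiset.eq_of_mem_replicate ha, irreducible_iff]
        simp
      · refine Subtype.ext ?_
        rw [Multiset.prod_replicate, SubmonoidClass.coe_pow, monomial_pow, mul_one]

end congMonoid

/-- Example 3.4.3(a): for `n ≥ 3` and
`H = {p_1^{k_1} p_2^{k_2} : k_1 ≡ k_2 (mod n)} ∪ {1}`: the atoms of `H` are
`p_1 p_2^{k}` and `p_1^{k} p_2` with `k ∈ 1 + nℕ_0`; the element
`a = p_1^{n+2} p_2^{n+2}` has `L_H(a) = {2, n+2}`; every distance of `H` is divisible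
by `n`, `n ∈ Δ(H)`, and `min Δ(H) = n`. -/
theorem congMonoid_min_delta
    (n : ℕ) (hn : 3 ≤ n) :
    ({x : FreeCM (Fin 2) | ∃ h : x ∈ congMonoid n, Irreducible (⟨x, h⟩ : congMonoid n)} =
      {x : FreeCM (Fin 2) |
        (Multiset.count 0 (Multiplicative.toAdd x) = 1 ∧
          ∃ m : ℕ, Multiset.count 1 (Multiplicative.toAdd x) = 1 + n * m) ∨
        (Multiset.count 1 (Multiplicative.toAdd x) = 1 ∧
          ∃ m : ℕ, Multiset.count 0 (Multiplicative.toAdd x) = 1 + n * m)}) ∧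
    (∃ h : Multiplicative.ofAdd (Multiset.replicate (n + 2) (0 : Fin 2) +
        Multiset.replicate (n + 2) (1 : Fin 2)) ∈ congMonoid n,
      lengthSet (⟨_, h⟩ : congMonoid n) = {2, n + 2}) ∧
    (∀ d ∈ DeltaMonoid ↥(congMonoid n), n ∣ d) ∧
    n ∈ DeltaMonoid ↥(congMonoid n) ∧
    sInf (DeltaMonoid ↥(congMonoid n)) = n := by
  have ha : monomial (n + 2) (n + 2) ∈ congMonoid n :=
    congMonoid.monomial_mem (by omega) (by omega) rfl
  have hL := congMonoid.lengthSet_monomial hn ha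
  have hdvd : ∀ d ∈ DeltaMonoid (congMonoid n), n ∣ d :=
    fun _ => congMonoid.dvd_of_mem_DeltaMonoid
  have hmem : n ∈ DeltaMonoid (congMonoid n) := by
    refine Set.mem_iUnion.2 ⟨⟨_, ha⟩, ?_⟩
    simpa [hL] using sub_mem_DeltaSet_pair (show 2 < n + 2 by omega)
  refine ⟨congMonoid.setOf_irreducible_eq n, ⟨ha, hL⟩, hdvd, hmem, ?_⟩
  exact IsLeast.csInf_eq ⟨hmem, fun d hd => Nat.le_of_dvd (pos_of_mem_DeltaMonoid hd) (hdvd d hd)⟩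

end
end ArXivSeminormal
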